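/- arXiv:2411.10153 — 4 statements merged into one kernel-verified Lean document; each statement's English description precedes it below -/
import Mathlib

section
/- Under the setup where the CPL transition probability p(s_{1:t}|s_{1:t-1}) depends only on s_t (independently each step with changepoint probability π), and the RL transition p(r_t|r_{t-1}) gives probability π to r_t = 0 and 1-π to r_t = r_{t-1}+1, the marginal posterior weight assigned to run length r_t equals the total marginal posterior weight of all CPL sequences s_{1:t} whose most recent changepoint occurred at time t - r_t + 1. Consequently, the posterior predictive distributions for y_{t+1} under Configuration 1 (CPL) and Configuration 2 (RL) are identical. -/
open Matrix MeasureTheory Real Finset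

/-- Density of a multivariate Gaussian `N(μ, S)` on `ℝᵈ`. -/
noncomputable def gaussPdf {d : ℕ} (μ : Fin d → ℝ) (S : Matrix (Fin d) (Fin d) ℝ)
    (x : Fin d → ℝ) : ℝ :=
  Real.exp (-(1 / 2) * ((x - μ) ⬝ᵥ (S⁻¹ *ᵥ (x - μ)))) /
    Real.sqrt ((2 * Real.pi) ^ d * S.det)

/-- One conjugate Gaussian update. -/
noncomputable def conjUpdate {d : ℕ} (L : Matrix (Fin d) (Fin d) ℝ)
    (p : (Fin d → ℝ) × Matrix (Fin d) (Fin d) ℝ) (y : Fin d → ℝ) :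
    (Fin d → ℝ) × Matrix (Fin d) (Fin d) ℝ :=
  ((p.2⁻¹ + L⁻¹)⁻¹ *ᵥ (p.2⁻¹ *ᵥ p.1 + L⁻¹ *ᵥ y), (p.2⁻¹ + L⁻¹)⁻¹)

/-- Posterior-predictive density of the next observation given a Gaussian belief `p`. -/
noncomputable def predPdf {d : ℕ} (L : Matrix (Fin d) (Fin d) ℝ)
    (p : (Fin d → ℝ) × Matrix (Fin d) (Fin d) ℝ) (z : Fin d → ℝ) : ℝ :=
  gaussPdf p.1 (p.2 + L) z

/-- CPL conditional posterior after observations `y 0, …, y (n-1)`: at step `i`,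
if `s i = true` the conditional prior resets to `base`, otherwise it continues. -/
noncomputable def cplPostN {d : ℕ} (L : Matrix (Fin d) (Fin d) ℝ)
    (base : (Fin d → ℝ) × Matrix (Fin d) (Fin d) ℝ)
    (s : ℕ → Bool) (y : ℕ → Fin d → ℝ) : ℕ → (Fin d → ℝ) × Matrix (Fin d) (Fin d) ℝ
  | 0 => base
  | n + 1 => conjUpdate L (if s n then base else cplPostN L base s y n) (y n)

/-- Conditional likelihood of `y 0, …, y (n-1)` given the changepoint sequence `s`. -/
noncomputable def cplLikN {d : ℕ} (L : Matrix (Fin d) (Fin d) ℝ)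
    (base : (Fin d → ℝ) × Matrix (Fin d) (Fin d) ℝ)
    (s : ℕ → Bool) (y : ℕ → Fin d → ℝ) : ℕ → ℝ
  | 0 => 1
  | n + 1 => cplLikN L base s y n *
      predPdf L (if s n then base else cplPostN L base s y n) (y n)

/-- Extension of `s : Fin t → Bool` to `ℕ → Bool` (false outside `[0, t)`). -/
def sExt {t : ℕ} (s : Fin t → Bool) : ℕ → Bool :=
  fun i => if h : i < t then s ⟨i, h⟩ else false

/-- Unnormalized CPL marginal posterior weight of a changepoint sequence `s`:
independent `Bernoulli(cp)` prior times the conditional likelihood of `y 0, …, y (t-1)`. -/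
noncomputable def cplW {d t : ℕ} (L : Matrix (Fin d) (Fin d) ℝ)
    (base : (Fin d → ℝ) × Matrix (Fin d) (Fin d) ℝ)
    (cp : ℝ) (y : ℕ → Fin d → ℝ) (s : Fin t → Bool) : ℝ :=
  (∏ i : Fin t, (if s i then cp else 1 - cp)) * cplLikN L base (sExt s) y t

/-- Index of the most recent changepoint of `s : Fin t → Bool`
(`0` if there is none, matching the fact that the initial prior is `base`). -/
def mrcF {t : ℕ} (s : Fin t → Bool) : ℕ :=
  (Finset.univ.filter fun i : Fin t => s i).sup fun i => (i : ℕ)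

/-- RL conditional posterior at time `t` (last observation `y t`) given run length `r`:
posterior from the `r + 1` observations `y (t-r), …, y t`, starting from `base`. -/
noncomputable def rlPostA {d : ℕ} (L : Matrix (Fin d) (Fin d) ℝ)
    (base : (Fin d → ℝ) × Matrix (Fin d) (Fin d) ℝ)
    (y : ℕ → Fin d → ℝ) (t r : ℕ) : (Fin d → ℝ) × Matrix (Fin d) (Fin d) ℝ :=
  ((List.range (r + 1)).map fun j => y (t - r + j)).foldl (conjUpdate L) base

/-- Unnormalized RL (BOCD-style) run-length weights after `n` observations, with
Markov run-length dynamics `p(r_n = 0 ∣ r_{n-1}) = cp`,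
`p(r_n = r_{n-1} + 1 ∣ r_{n-1}) = 1 - cp`. -/
noncomputable def wRL {d : ℕ} (L : Matrix (Fin d) (Fin d) ℝ)
    (base : (Fin d → ℝ) × Matrix (Fin d) (Fin d) ℝ)
    (cp : ℝ) (y : ℕ → Fin d → ℝ) : ℕ → ℕ → ℝ
  | 0, _ => 0
  | 1, r => if r = 0 then predPdf L base (y 0) else 0
  | n + 2, 0 =>
      cp * (∑ r' ∈ Finset.range (n + 1), wRL L base cp y (n + 1) r') *
        predPdf L base (y (n + 1))
  | n + 2, r + 1 =>
      (1 - cp) * wRL L base cp y (n + 1) r * predPdf L (rlPostA L base y n r) (y (n + 1))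

section Aux

variable {d : ℕ} (L : Matrix (Fin d) (Fin d) ℝ)
  (base : (Fin d → ℝ) × Matrix (Fin d) (Fin d) ℝ)
  (cp : ℝ) (y : ℕ → Fin d → ℝ)

lemma cplPostN_congr {s s' : ℕ → Bool} :
    ∀ n, (∀ i < n, s i = s' i) → cplPostN L base s y n = cplPostN L base s' y n
  | 0, _ => rfl
  | n + 1, h => by
    have h1 := cplPostN_congr (s := s) (s' := s') n
      (fun i hi => h i (hi.trans (Nat.lt_succ_self n)))
    simp only [cplPostN, h n (Nat.lt_succ_self n), h1]

lemma cplLikN_congr {s s' : ℕ → Bool} :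
    ∀ n, (∀ i < n, s i = s' i) → cplLikN L base s y n = cplLikN L base s' y n
  | 0, _ => rfl
  | n + 1, h => by
    have h1 := cplLikN_congr (s := s) (s' := s') n
      (fun i hi => h i (hi.trans (Nat.lt_succ_self n)))
    have h2 := cplPostN_congr L base y (s := s) (s' := s') n
      (fun i hi => h i (hi.trans (Nat.lt_succ_self n)))
    simp only [cplLikN, h n (Nat.lt_succ_self n), h1, h2]

lemma rlPostA_zero (n : ℕ) : rlPostA L base y n 0 = conjUpdate L base (y n) := by
  simp [rlPostA, List.range_succ]

lemma rlPostA_succ (m k : ℕ) :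
    rlPostA L base y (m + k + 1) (k + 1) =
      conjUpdate L (rlPostA L base y (m + k) k) (y (m + k + 1)) := by
  have h1 : m + k + 1 - (k + 1) = m := by omega
  have h2 : m + k - k = m := by omega
  simp only [rlPostA, h1, h2, List.range_succ, List.map_append, List.foldl_append,
    List.map_cons, List.map_nil, List.foldl_cons, List.foldl_nil]
  rfl

lemma cplPostN_of_segment (s : ℕ → Bool) (m : ℕ) (hm : s m = true ∨ m = 0) :
    ∀ k, (∀ i, m < i → i ≤ m + k → s i = false) →
      cplPostN L base s y (m + 1 + k) = rlPostA L base y (m + k) k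
  | 0, _ => by
    rcases hm with h | rfl
    · simp [cplPostN, h, rlPostA_zero]
    · cases h0 : s 0 <;> simp [cplPostN, h0, rlPostA_zero]
  | k + 1, h => by
    have hs : s (m + 1 + k) = false := h _ (by omega) (by omega)
    have ih := cplPostN_of_segment s m hm k (fun i h1 h2 => h i h1 (by omega))
    have e1 : m + 1 + (k + 1) = (m + 1 + k) + 1 := by omega
    have e2 : m + 1 + k = m + k + 1 := by omega
    rw [e1, show m + (k + 1) = m + k + 1 from by omega, rlPostA_succ,
      show cplPostN L base s y (m + 1 + k + 1) =
        conjUpdate L (if s (m + 1 + k) = true then base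
          else cplPostN L base s y (m + 1 + k)) (y (m + 1 + k)) from rfl,
      hs, if_neg Bool.false_ne_true, ih, e2]

lemma mrcF_lt {t : ℕ} (ht : 0 < t) (s : Fin t → Bool) : mrcF s < t := by
  rcases Finset.eq_empty_or_nonempty ((Finset.univ.filter fun i : Fin t => s i)) with h | h
  · simp [mrcF, h, ht]
  · obtain ⟨i, _, hsup⟩ := Finset.exists_mem_eq_sup _ h (fun i : Fin t => (i : ℕ))
    simpa [mrcF, hsup] using i.isLt

lemma sExt_false_of_mrc {t : ℕ} (s : Fin t → Bool) {m i : ℕ} (hm : mrcF s = m)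
    (hi : m < i) : sExt s i = false := by
  unfold sExt
  split
  · rename_i h
    by_contra hc
    have hst : s ⟨i, h⟩ = true := by simpa using hc
    have hmem : (⟨i, h⟩ : Fin t) ∈ Finset.univ.filter fun j => s j := by
      simp [hst]
    have hle := Finset.le_sup (f := fun j : Fin t => (j : ℕ)) hmem
    rw [show ((Finset.univ.filter fun j : Fin t => s j).sup fun j => (j : ℕ)) = mrcF s
      from rfl, hm] at hle
    simp only at hle
    omega
  · rfl

lemma sExt_true_of_mrc {t : ℕ} (s : Fin t → Bool) {m : ℕ} (hm : mrcF s = m)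
    (hm0 : 0 < m) : sExt s m = true := by
  have hne : (Finset.univ.filter fun i : Fin t => s i).Nonempty := by
    by_contra h
    rw [Finset.not_nonempty_iff_eq_empty] at h
    simp [mrcF, h] at hm
    omega
  obtain ⟨i, hi, hsup⟩ := Finset.exists_mem_eq_sup _ hne (fun i : Fin t => (i : ℕ))
  have him : (i : ℕ) = m := by
    rw [← hm]
    exact hsup.symm
  have hit : s i = true := by simpa using (Finset.mem_filter.mp hi).2
  have hlt : m < t := him ▸ i.isLt
  unfold sExt
  rw [dif_pos hlt]
  have : (⟨m, hlt⟩ : Fin t) = i := Fin.ext him.symm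
  rw [this, hit]

lemma cplPostN_eq_rlPostA {t : ℕ} (ht : 1 ≤ t) (s : Fin t → Bool) {m : ℕ}
    (hm : mrcF s = m) :
    cplPostN L base (sExt s) y t = rlPostA L base y (t - 1) (t - 1 - m) := by
  have hmt : m < t := hm ▸ mrcF_lt ht s
  obtain ⟨k, hk⟩ : ∃ k, t - 1 - m = k := ⟨_, rfl⟩
  rw [hk]
  have h1 : t = m + 1 + k := by omega
  have h2 : t - 1 = m + k := by omega
  calc cplPostN L base (sExt s) y t = cplPostN L base (sExt s) y (m + 1 + k) :=
        congrArg (cplPostN L base (sExt s) y) h1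
    _ = rlPostA L base y (m + k) k := by
        apply cplPostN_of_segment
        · rcases Nat.eq_zero_or_pos m with h | h
          · exact Or.inr h
          · exact Or.inl (sExt_true_of_mrc s hm h)
        · intro i hi _
          exact sExt_false_of_mrc s hm hi
    _ = rlPostA L base y (t - 1) k := (congrArg (fun a => rlPostA L base y a k) h2).symm

lemma sExt_snoc_lt {t : ℕ} (s' : Fin t → Bool) (b : Bool) {i : ℕ} (hi : i < t) :
    sExt (Fin.snoc s' b) i = sExt s' i := by
  unfold sExt
  rw [dif_pos (Nat.lt_succ_of_lt hi), dif_pos hi]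
  have h : (⟨i, Nat.lt_succ_of_lt hi⟩ : Fin (t + 1)) = Fin.castSucc ⟨i, hi⟩ := rfl
  rw [h, Fin.snoc_castSucc]

lemma sExt_snoc_last {t : ℕ} (s' : Fin t → Bool) (b : Bool) :
    sExt (Fin.snoc s' b) t = b := by
  unfold sExt
  rw [dif_pos (Nat.lt_succ_self t)]
  have h : (⟨t, Nat.lt_succ_self t⟩ : Fin (t + 1)) = Fin.last t := rfl
  rw [h, Fin.snoc_last]

lemma mrcF_snoc_true {t : ℕ} (s' : Fin t → Bool) : mrcF (Fin.snoc s' true) = t := by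
  unfold mrcF
  apply le_antisymm
  · apply Finset.sup_le
    intro i _
    exact Nat.lt_succ_iff.mp i.isLt
  · have hmem : Fin.last t ∈ Finset.univ.filter
        (fun i : Fin (t + 1) => Fin.snoc (α := fun _ => Bool) s' true i = true) := by
      simp [Fin.snoc_last]
    have := Finset.le_sup (f := fun i : Fin (t + 1) => (i : ℕ)) hmem
    simpa using this

lemma mrcF_snoc_false {t : ℕ} (s' : Fin t → Bool) :
    mrcF (Fin.snoc s' false) = mrcF s' := by
  unfold mrcF
  have himg : (Finset.univ.filter
      fun i : Fin (t + 1) => Fin.snoc (α := fun _ => Bool) s' false i = true) =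
      (Finset.univ.filter fun i : Fin t => s' i = true).image Fin.castSucc := by
    ext i
    simp only [Finset.mem_filter, Finset.mem_univ, true_and, Finset.mem_image]
    constructor
    · intro hsi
      rcases Fin.eq_castSucc_or_eq_last i with ⟨j, rfl⟩ | rfl
      · exact ⟨j, by simpa [Fin.snoc_castSucc] using hsi, rfl⟩
      · simp [Fin.snoc_last] at hsi
    · rintro ⟨j, hj, rfl⟩
      simpa [Fin.snoc_castSucc] using hj
  rw [himg, Finset.sup_image]
  rfl

lemma cplW_snoc {t : ℕ} (s' : Fin t → Bool) (b : Bool) :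
    cplW L base cp y (Fin.snoc s' b) =
      cplW L base cp y s' * (if b then cp else 1 - cp) *
        predPdf L (if b then base else cplPostN L base (sExt s') y t) (y t) := by
  unfold cplW
  rw [Fin.prod_univ_castSucc]
  simp only [Fin.snoc_castSucc, Fin.snoc_last]
  have hlik : cplLikN L base (sExt (Fin.snoc s' b)) y (t + 1) =
      cplLikN L base (sExt s') y t *
        predPdf L (if b then base else cplPostN L base (sExt s') y t) (y t) := by
    rw [show cplLikN L base (sExt (Fin.snoc s' b)) y (t + 1) =
        cplLikN L base (sExt (Fin.snoc s' b)) y t *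
          predPdf L (if sExt (Fin.snoc s' b) t then base
            else cplPostN L base (sExt (Fin.snoc s' b)) y t) (y t) from rfl]
    rw [cplLikN_congr L base y t (fun i hi => sExt_snoc_lt s' b hi),
      cplPostN_congr L base y t (fun i hi => sExt_snoc_lt s' b hi),
      sExt_snoc_last]
  rw [hlik]
  ring

lemma sum_snoc {t : ℕ} (f : (Fin (t + 1) → Bool) → ℝ) :
    ∑ s : Fin (t + 1) → Bool, f s =
      ∑ s' : Fin t → Bool, (f (Fin.snoc s' false) + f (Fin.snoc s' true)) := by
  rw [← Equiv.sum_comp (Fin.snocEquiv (fun _ => Bool)) f, Fintype.sum_prod_type_right]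
  refine Finset.sum_congr rfl fun s' _ => ?_
  rw [Fintype.sum_bool]
  rw [add_comm]
  rfl

lemma sum_fiber {t : ℕ} (ht : 1 ≤ t) (f : (Fin t → Bool) → ℝ) :
    ∑ s : Fin t → Bool, f s =
      ∑ r ∈ Finset.range t,
        ∑ s ∈ (Finset.univ.filter fun s : Fin t → Bool => mrcF s = t - 1 - r), f s := by
  rw [← Finset.sum_fiberwise_of_maps_to
    (g := fun s : Fin t → Bool => t - 1 - mrcF s) (t := Finset.range t)
    (fun s _ => Finset.mem_range.mpr
      (by show t - 1 - mrcF s < t; have := mrcF_lt ht s; omega)) f]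
  refine Finset.sum_congr rfl fun r hr => ?_
  refine Finset.sum_congr ?_ fun _ _ => rfl
  apply Finset.filter_congr
  intro s _
  have h1 := mrcF_lt ht s
  have h2 := Finset.mem_range.mp hr
  show t - 1 - mrcF s = r ↔ mrcF s = t - 1 - r
  omega

lemma main_w : ∀ t, 1 ≤ t → ∀ r < t,
    wRL L base cp y t r =
      ∑ s ∈ (Finset.univ.filter fun s : Fin t → Bool => mrcF s = t - 1 - r),
        cplW L base cp y s := by
  intro t ht
  induction t, ht using Nat.le_induction with
  | base =>
    intro r hr
    interval_cases r
    have hfil : (Finset.univ.filter fun s : Fin 1 → Bool => mrcF s = 1 - 1 - 0) =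
        Finset.univ := by
      apply Finset.filter_true_of_mem
      intro s _
      have := mrcF_lt (t := 1) one_pos s
      omega
    rw [hfil]
    have hsum : ∑ s : Fin 1 → Bool, cplW L base cp y s =
        ∑ b : Bool, (if b then cp else 1 - cp) * predPdf L base (y 0) := by
      apply Fintype.sum_equiv (Equiv.funUnique (Fin 1) Bool)
      intro s
      unfold cplW
      rw [Fin.prod_univ_one]
      have hlik : cplLikN L base (sExt s) y 1 = predPdf L base (y 0) := by
        rw [show cplLikN L base (sExt s) y 1 =
          1 * predPdf L (if sExt s 0 then base
            else cplPostN L base (sExt s) y 0) (y 0) from rfl]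
        rw [show cplPostN L base (sExt s) y 0 = base from rfl, ite_self, one_mul]
      rw [hlik]
      have h0 : (Equiv.funUnique (Fin 1) Bool) s = s 0 := rfl
      rw [h0]
    rw [hsum, Fintype.sum_bool,
      show wRL L base cp y 1 0 = predPdf L base (y 0) from by simp [wRL]]
    norm_num
    ring
  | succ t ht IH =>
    intro r hr
    obtain ⟨n, rfl⟩ : ∃ n, t = n + 1 := ⟨t - 1, by omega⟩
    have hsumAll : ∑ s' : Fin (n + 1) → Bool, cplW L base cp y s' =
        ∑ r' ∈ Finset.range (n + 1), wRL L base cp y (n + 1) r' := by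
      rw [sum_fiber ht]
      exact Finset.sum_congr rfl fun r' hr' =>
        (IH r' (Finset.mem_range.mp hr')).symm
    rw [Finset.sum_filter, sum_snoc]
    match r with
    | 0 =>
      have hne : ∀ s' : Fin (n + 1) → Bool, ¬ (mrcF (Fin.snoc s' false) = n + 2 - 1 - 0) := by
        intro s'
        rw [mrcF_snoc_false]
        have := mrcF_lt (t := n + 1) (by omega) s'
        omega
      have heq : ∀ s' : Fin (n + 1) → Bool, mrcF (Fin.snoc s' true) = n + 2 - 1 - 0 := by
        intro s'
        rw [mrcF_snoc_true]
        omega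
      simp only [hne, if_false, heq, if_true, zero_add]
      have : ∀ s' : Fin (n + 1) → Bool, cplW L base cp y (Fin.snoc s' true) =
          cplW L base cp y s' * cp * predPdf L base (y (n + 1)) := by
        intro s'
        rw [cplW_snoc]
        simp
      rw [Finset.sum_congr rfl fun s' _ => this s']
      rw [show wRL L base cp y (n + 1 + 1) 0 =
        cp * (∑ r' ∈ Finset.range (n + 1), wRL L base cp y (n + 1) r') *
          predPdf L base (y (n + 1)) from rfl]
      rw [← hsumAll, ← Finset.sum_mul, ← Finset.sum_mul]
      ring
    | r'' + 1 =>
      have hr'' : r'' < n + 1 := by omega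
      have hmt : n + 2 - 1 - (r'' + 1) = n + 1 - 1 - r'' := by omega
      have hne : ∀ s' : Fin (n + 1) → Bool,
          ¬ (mrcF (Fin.snoc s' true) = n + 1 - 1 - r'') := by
        intro s'
        rw [mrcF_snoc_true]
        omega
      simp only [hmt, hne, if_false, add_zero, mrcF_snoc_false]
      have hcw : ∀ s' : Fin (n + 1) → Bool, mrcF s' = n + 1 - 1 - r'' →
          cplW L base cp y (Fin.snoc s' false) =
            (1 - cp) * cplW L base cp y s' *
              predPdf L (rlPostA L base y n r'') (y (n + 1)) := by
        intro s' hm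
        rw [cplW_snoc]
        simp only [Bool.false_eq_true, if_false]
        rw [cplPostN_eq_rlPostA L base y (by omega) s' hm]
        rw [show n + 1 - 1 = n from rfl, show n - (n - r'') = r'' from by omega]
        ring
      rw [show wRL L base cp y (n + 1 + 1) (r'' + 1) =
        (1 - cp) * wRL L base cp y (n + 1) r'' *
          predPdf L (rlPostA L base y n r'') (y (n + 1)) from rfl]
      rw [IH r'' hr'', ← Finset.sum_filter,
        Finset.sum_congr rfl fun s' hs' => hcw s' (Finset.mem_filter.mp hs').2,
        ← Finset.sum_mul, ← Finset.mul_sum]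

end Aux

/-- CPL–RL equivalence: with independent `Bernoulli(cp)` changepoints (Configuration 1)
and the corresponding Markov run-length dynamics (Configuration 2), the marginal
posterior weight of run length `r` equals the total marginal posterior weight of all
changepoint sequences whose most recent changepoint is at time `t - 1 - r`; and
consequently both configurations give identical posterior predictive distributions
for the next observation. -/
theorem cpl_rl_equivalence {d : ℕ} (t : ℕ) (ht : 1 ≤ t)
    (Λ S0 : Matrix (Fin d) (Fin d) ℝ) (hΛ : Λ.PosDef) (hS0 : S0.PosDef)
    (μ₀ : Fin d → ℝ) (y : ℕ → Fin d → ℝ) (cp : ℝ) (hcp : cp ∈ Set.Ioo (0 : ℝ) 1) :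
    (∀ r < t,
      wRL Λ (μ₀, S0) cp y t r =
        ∑ s ∈ (Finset.univ.filter fun s : Fin t → Bool => mrcF s = t - 1 - r),
          cplW Λ (μ₀, S0) cp y s) ∧
    (∀ z : Fin d → ℝ,
      (∑ s : Fin t → Bool,
          cplW Λ (μ₀, S0) cp y s * predPdf Λ (cplPostN Λ (μ₀, S0) (sExt s) y t) z) /
        (∑ s : Fin t → Bool, cplW Λ (μ₀, S0) cp y s) =
      (∑ r ∈ Finset.range t,
          wRL Λ (μ₀, S0) cp y t r * predPdf Λ (rlPostA Λ (μ₀, S0) y (t - 1) r) z) /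
        (∑ r ∈ Finset.range t, wRL Λ (μ₀, S0) cp y t r)) := by
  have h1 := main_w Λ (μ₀, S0) cp y t ht
  refine ⟨h1, ?_⟩
  intro z
  have hden : ∑ s : Fin t → Bool, cplW Λ (μ₀, S0) cp y s =
      ∑ r ∈ Finset.range t, wRL Λ (μ₀, S0) cp y t r := by
    rw [sum_fiber ht]
    exact Finset.sum_congr rfl fun r hr => (h1 r (Finset.mem_range.mp hr)).symm
  have hnum : ∑ s : Fin t → Bool,
      cplW Λ (μ₀, S0) cp y s * predPdf Λ (cplPostN Λ (μ₀, S0) (sExt s) y t) z =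
      ∑ r ∈ Finset.range t,
        wRL Λ (μ₀, S0) cp y t r * predPdf Λ (rlPostA Λ (μ₀, S0) y (t - 1) r) z := by
    rw [sum_fiber ht]
    refine Finset.sum_congr rfl fun r hr => ?_
    have hrt : r < t := Finset.mem_range.mp hr
    rw [h1 r hrt, Finset.sum_mul]
    refine Finset.sum_congr rfl fun s hs => ?_
    rw [cplPostN_eq_rlPostA Λ (μ₀, S0) y ht s (Finset.mem_filter.mp hs).2,
      show t - 1 - (t - 1 - r) = r from by omega]
  rw [hnum, hden]
end

section
/- In the CPL configuration with independent Bernoulli(π) changepoints, the number of distinct conditional posteriors at time t (i.e., distinct values of (μ_{(s_{1:t})}, Σ_{(s_{1:t})}) over all 2^t sequences s_{1:t}) is at most t + 1, since the conditional posterior depends on s_{1:t} only through the time of the most recent changepoint. -/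
open Matrix Finset

/- In the CPL configuration, the number of distinct conditional posteriors
`(μ_{(s_{1:t})}, Σ_{(s_{1:t})})` over all `2^t` changepoint sequences `s` is at most
`t + 1`, because the conditional posterior depends on `s` only through the time of
the most recent changepoint: see `cpl_distinct_posteriors_le` below. -/

/-- Posterior obtained by starting from `base` at time `r` and updating with
`y r, …, y (r+k-1)`. -/
noncomputable def runFrom {d : ℕ} (L : Matrix (Fin d) (Fin d) ℝ)
    (base : (Fin d → ℝ) × Matrix (Fin d) (Fin d) ℝ)
    (y : ℕ → Fin d → ℝ) (r : ℕ) : ℕ → (Fin d → ℝ) × Matrix (Fin d) (Fin d) ℝ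
  | 0 => base
  | k + 1 => conjUpdate L (runFrom L base y r k) (y (r + k))

theorem cplPostN_eq_runFrom {d : ℕ} (L : Matrix (Fin d) (Fin d) ℝ)
    (base : (Fin d → ℝ) × Matrix (Fin d) (Fin d) ℝ)
    (s : ℕ → Bool) (y : ℕ → Fin d → ℝ) (n : ℕ) :
    ∃ r ≤ n, cplPostN L base s y n = runFrom L base y r (n - r) := by
  induction n with
  | zero => exact ⟨0, le_rfl, rfl⟩
  | succ n ih =>
    obtain ⟨r, hr, heq⟩ := ih
    by_cases h : s n
    · refine ⟨n, Nat.le_succ n, ?_⟩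
      have h1 : n + 1 - n = 1 := by omega
      rw [h1]
      simp [cplPostN, h, runFrom]
    · refine ⟨r, hr.trans (Nat.le_succ n), ?_⟩
      have h1 : n + 1 - r = (n - r) + 1 := by omega
      have h2 : r + (n - r) = n := Nat.add_sub_cancel' hr
      rw [h1]
      simp only [cplPostN, runFrom, h2, h, if_false, heq]
      simp

/-- In the CPL configuration, the number of distinct conditional posteriors
`(μ_{(s_{1:t})}, Σ_{(s_{1:t})})` over all `2^t` changepoint sequences `s` is at most
`t + 1`, because the conditional posterior depends on `s` only through the time of
the most recent changepoint. -/
theorem cpl_distinct_posteriors_le {d : ℕ} (t : ℕ)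
    (Λ S0 : Matrix (Fin d) (Fin d) ℝ) (hΛ : Λ.PosDef) (hS0 : S0.PosDef)
    (μ₀ : Fin d → ℝ) (y : ℕ → Fin d → ℝ) :
    (Set.range fun s : Fin t → Bool => cplPostN Λ (μ₀, S0) (sExt s) y t).ncard
      ≤ t + 1 := by
  have hsub : (Set.range fun s : Fin t → Bool => cplPostN Λ (μ₀, S0) (sExt s) y t)
      ⊆ Set.range (fun r : Fin (t + 1) => runFrom Λ (μ₀, S0) y r (t - r)) := by
    rintro p ⟨s, rfl⟩
    obtain ⟨r, hr, heq⟩ := cplPostN_eq_runFrom Λ (μ₀, S0) (sExt s) y t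
    exact ⟨⟨r, by omega⟩, heq.symm⟩
  calc (Set.range fun s : Fin t → Bool => cplPostN Λ (μ₀, S0) (sExt s) y t).ncard
      ≤ (Set.range (fun r : Fin (t + 1) => runFrom Λ (μ₀, S0) y r (t - r))).ncard :=
        Set.ncard_le_ncard hsub (Set.finite_range _)
    _ ≤ (Set.univ : Set (Fin (t + 1))).ncard := by
        rw [← Set.image_univ]
        exact Set.ncard_image_le Set.finite_univ
    _ = t + 1 := by simp [Set.ncard_univ]
end

section
/- For the Kalman filter for a static Gaussian mean (transition identity, no process noise) with observation model N(y_t; θ, Λ), the posterior covariance Σ_t = (Σ₀⁻¹ + tΛ⁻¹)⁻¹ converges to the zero matrix as t → ∞, so the filter loses adaptivity; in contrast, with multiplicative inflation factor α > 1, the posterior covariance Σ_t satisfies Σ_t ⪰ c I for some c > 0 for all t in the scalar case (d = 1), i.e., it is bounded below away from zero. -/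
open Matrix Filter Topology

/-- Static Kalman filter vs. covariance inflation. Without process noise the
posterior covariance `Σ_t = (Σ₀⁻¹ + t Λ⁻¹)⁻¹` converges to the zero matrix as
`t → ∞` (loss of adaptivity), whereas in the scalar case the multiplicative
inflation recursion `σ_t = ((α σ_{t-1})⁻¹ + λ⁻¹)⁻¹` with `α > 1` keeps the
posterior variance bounded below away from zero. -/
theorem static_kf_covariance_vanishes_but_inflation_does_not {d : ℕ}
    (Λ S0 : Matrix (Fin d) (Fin d) ℝ) (hΛ : Λ.PosDef) (hS0 : S0.PosDef) :
    Tendsto (fun t : ℕ => (S0⁻¹ + (t : ℝ) • Λ⁻¹)⁻¹) atTop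
      (𝓝 (0 : Matrix (Fin d) (Fin d) ℝ)) ∧
    (∀ (α lam : ℝ) (σ : ℕ → ℝ), 1 < α → 0 < lam → 0 < σ 0 →
      (∀ n, σ (n + 1) = ((α * σ n)⁻¹ + lam⁻¹)⁻¹) →
      ∃ c : ℝ, 0 < c ∧ ∀ n, c ≤ σ n) := by
  constructor
  · -- Part 1: covariance vanishes
    have hdet : Λ⁻¹.det ≠ 0 := hΛ.inv.det_pos.ne'
    have hz : Tendsto (fun t : ℕ => ((t : ℝ)⁻¹)) atTop (𝓝 0) :=
      tendsto_inv_atTop_zero.comp tendsto_natCast_atTop_atTop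
    have hft : Tendsto (fun t : ℕ => ((t : ℝ)⁻¹ • S0⁻¹ + Λ⁻¹)) atTop (𝓝 Λ⁻¹) := by
      have := (hz.smul_const S0⁻¹).add_const Λ⁻¹
      simpa using this
    have hdetf : Tendsto (fun t : ℕ => ((t : ℝ)⁻¹ • S0⁻¹ + Λ⁻¹).det) atTop (𝓝 Λ⁻¹.det) :=
      ((Continuous.matrix_det continuous_id).continuousAt (x := Λ⁻¹)).tendsto.comp hft
    have hadj : Tendsto (fun t : ℕ => ((t : ℝ)⁻¹ • S0⁻¹ + Λ⁻¹).adjugate) atTop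
        (𝓝 Λ⁻¹.adjugate) :=
      ((Continuous.matrix_adjugate continuous_id).continuousAt (x := Λ⁻¹)).tendsto.comp hft
    have hinv : Tendsto (fun t : ℕ => ((t : ℝ)⁻¹ • S0⁻¹ + Λ⁻¹)⁻¹) atTop (𝓝 (Λ⁻¹)⁻¹) := by
      have h := (hdetf.inv₀ hdet).smul hadj
      have heq : ∀ (M : Matrix (Fin d) (Fin d) ℝ), M⁻¹ = (M.det)⁻¹ • M.adjugate := by
        intro M; rw [Matrix.inv_def, Ring.inverse_eq_inv]
      simp only [← heq] at h
      exact h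
    have hmain : Tendsto (fun t : ℕ => (t : ℝ)⁻¹ • ((t : ℝ)⁻¹ • S0⁻¹ + Λ⁻¹)⁻¹) atTop
        (𝓝 (0 : Matrix (Fin d) (Fin d) ℝ)) := by
      have := hz.smul hinv
      simpa using this
    refine hmain.congr' ?_
    have hev : ∀ᶠ t : ℕ in atTop, ((t : ℝ)⁻¹ • S0⁻¹ + Λ⁻¹).det ≠ 0 :=
      hdetf.eventually_ne hdet
    filter_upwards [eventually_ge_atTop 1, hev] with t ht htdet
    have ht0 : (t : ℝ) ≠ 0 := by
      have : (1:ℝ) ≤ (t:ℝ) := by exact_mod_cast ht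
      linarith
    have hrw : S0⁻¹ + (t : ℝ) • Λ⁻¹ = (t : ℝ) • ((t : ℝ)⁻¹ • S0⁻¹ + Λ⁻¹) := by
      rw [smul_add, smul_smul, mul_inv_cancel₀ ht0, one_smul]
    rw [hrw]
    have hone : ((t : ℝ)⁻¹ • ((t : ℝ)⁻¹ • S0⁻¹ + Λ⁻¹)⁻¹) * ((t : ℝ) • ((t : ℝ)⁻¹ • S0⁻¹ + Λ⁻¹)) = 1 := by
      rw [Matrix.smul_mul, Matrix.mul_smul, smul_smul, inv_mul_cancel₀ ht0, one_smul,
        Matrix.nonsing_inv_mul _ (Ne.isUnit htdet)]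
    rw [Matrix.inv_eq_left_inv hone]
  · -- Part 2: inflation keeps variance bounded below
    intro α lam σ hα hlam hσ0 hrec
    have hα0 : (0:ℝ) < α := by linarith
    set c : ℝ := min (σ 0) (lam * (α - 1) / α) with hc
    have hc0 : 0 < c := by
      have h1 : (0:ℝ) < α - 1 := by linarith
      exact lt_min hσ0 (by positivity)
    refine ⟨c, hc0, ?_⟩
    intro n
    induction n with
    | zero => exact min_le_left _ _
    | succ n ih =>
      have hσn : 0 < σ n := lt_of_lt_of_le hc0 ih
      rw [hrec n]
      have hy : 0 < (α * σ n)⁻¹ + lam⁻¹ := by positivity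
      rw [le_inv_comm₀ hc0 hy]
      have h1 : (α * σ n)⁻¹ ≤ (α * c)⁻¹ := by
        apply inv_anti₀ (by positivity)
        exact mul_le_mul_of_nonneg_left ih hα0.le
      have hcle : c ≤ lam * (α - 1) / α := min_le_right _ _
      have h2 : (α * c)⁻¹ + lam⁻¹ ≤ c⁻¹ := by
        rw [← one_div, ← one_div, ← one_div, div_add_div _ _ (by positivity) hlam.ne',
          div_le_div_iff₀ (by positivity) hc0]
        have hcle' : c * α ≤ lam * (α - 1) := by
          rw [le_div_iff₀ hα0] at hcle
          exact hcle
        nlinarith [hc0, hlam, hα0]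
      linarith
end

section
/- In the scalar case, the inflation recursion σ_t = ((α σ_{t-1})⁻¹ + λ⁻¹)⁻¹ with α > 1, λ > 0, σ₀ > 0 has the unique positive fixed point σ* = λ(α-1)/α, and σ_t → σ* monotonically. -/
open Filter Topology

/-- Scalar multiplicative covariance inflation: the recursion
`σ_t = ((α σ_{t-1})⁻¹ + λ⁻¹)⁻¹` with `α > 1`, `λ > 0`, `σ₀ > 0` has the unique
positive fixed point `σ* = λ(α - 1)/α`, and `σ_t → σ*` monotonically. -/
theorem scalar_inflation_fixed_point (α lam : ℝ) (hα : 1 < α) (hlam : 0 < lam)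
    (σ : ℕ → ℝ) (hσ0 : 0 < σ 0)
    (hrec : ∀ n, σ (n + 1) = ((α * σ n)⁻¹ + lam⁻¹)⁻¹) :
    (((α * (lam * (α - 1) / α))⁻¹ + lam⁻¹)⁻¹ = lam * (α - 1) / α) ∧
    (∀ x : ℝ, 0 < x → ((α * x)⁻¹ + lam⁻¹)⁻¹ = x → x = lam * (α - 1) / α) ∧
    Tendsto σ atTop (𝓝 (lam * (α - 1) / α)) ∧
    (Monotone σ ∨ Antitone σ) := by
  have hα0 : (0:ℝ) < α := lt_trans one_pos hα
  have hα0' : α ≠ 0 := ne_of_gt hα0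
  have hlam' : lam ≠ 0 := ne_of_gt hlam
  have hα1 : α - 1 ≠ 0 := sub_ne_zero.mpr (ne_of_gt hα)
  set s : ℝ := α / (lam * (α - 1)) with hs
  have hspos : 0 < s := div_pos hα0 (mul_pos hlam (by linarith))
  set d : ℝ := (σ 0)⁻¹ - s with hd
  -- positivity of the sequence
  have hpos : ∀ n, 0 < σ n := by
    intro n
    induction n with
    | zero => exact hσ0
    | succ n ih =>
      rw [hrec n]
      positivity
  -- reciprocal recursion
  have hyrec : ∀ n, (σ (n + 1))⁻¹ = α⁻¹ * (σ n)⁻¹ + lam⁻¹ := by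
    intro n
    rw [hrec n, inv_inv, mul_inv]
  have hsfix : s = α⁻¹ * s + lam⁻¹ := by
    rw [hs]; field_simp; ring
  -- explicit formula
  have hform : ∀ n, (σ n)⁻¹ = (α⁻¹) ^ n * d + s := by
    intro n
    induction n with
    | zero => simp [hd]
    | succ n ih =>
      rw [hyrec n, ih, pow_succ]
      nlinarith [hsfix]
  have hinv : lam * (α - 1) / α = s⁻¹ := by
    rw [hs, inv_div]
  refine ⟨?_, ?_, ?_, ?_⟩
  · -- fixed point equation
    have h1 : α * (lam * (α - 1) / α) = lam * (α - 1) := by field_simp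
    rw [h1]
    have h2 : (lam * (α - 1))⁻¹ + lam⁻¹ = α / (lam * (α - 1)) := by
      field_simp
      ring
    rw [h2, inv_div]
  · -- uniqueness
    intro x hx hfx
    have hx' : x ≠ 0 := ne_of_gt hx
    have h2 : (α * x)⁻¹ + lam⁻¹ = x⁻¹ := by
      have := congrArg Inv.inv hfx
      rwa [inv_inv] at this
    field_simp at h2
    field_simp
    nlinarith [h2]
  · -- convergence
    have hgeo : Tendsto (fun n : ℕ => (α⁻¹) ^ n * d + s) atTop (𝓝 (0 * d + s)) := by
      exact ((tendsto_pow_atTop_nhds_zero_of_lt_one (by positivity)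
        (inv_lt_one_of_one_lt₀ hα)).mul_const d).add_const s
    rw [zero_mul, zero_add] at hgeo
    have : Tendsto (fun n => ((σ n)⁻¹)⁻¹) atTop (𝓝 s⁻¹) := by
      have := hgeo.inv₀ (ne_of_gt hspos)
      refine this.congr fun n => ?_
      rw [hform n]
    rw [hinv]
    refine this.congr fun n => inv_inv (σ n)
  · -- monotonicity
    rcases le_or_gt 0 d with hd0 | hd0
    · left
      refine monotone_nat_of_le_succ fun n => ?_
      have hle : (σ (n + 1))⁻¹ ≤ (σ n)⁻¹ := by
        rw [hform n, hform (n + 1), pow_succ]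
        have : (α⁻¹) ^ n * α⁻¹ * d ≤ (α⁻¹) ^ n * d := by
          have h1 : (α⁻¹) ^ n * α⁻¹ ≤ (α⁻¹) ^ n := by
            have := inv_le_one_of_one_le₀ (le_of_lt hα)
            nlinarith [pow_pos (inv_pos.mpr hα0) n]
          exact mul_le_mul_of_nonneg_right h1 hd0
        linarith
      have := inv_anti₀ (inv_pos.mpr (hpos (n + 1))) hle
      rwa [inv_inv, inv_inv] at this
    · right
      refine antitone_nat_of_succ_le fun n => ?_
      have hle : (σ n)⁻¹ ≤ (σ (n + 1))⁻¹ := by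
        rw [hform n, hform (n + 1), pow_succ]
        have : (α⁻¹) ^ n * d ≤ (α⁻¹) ^ n * α⁻¹ * d := by
          have h1 : (α⁻¹) ^ n * α⁻¹ ≤ (α⁻¹) ^ n := by
            have := inv_le_one_of_one_le₀ (le_of_lt hα)
            nlinarith [pow_pos (inv_pos.mpr hα0) n]
          exact mul_le_mul_of_nonpos_right h1 hd0.le
        linarith
      have := inv_anti₀ (inv_pos.mpr (hpos n)) hle
      rwa [inv_inv, inv_inv] at this
end
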